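/- Existence of a deterministic global minimizer: suppose every entry of the channel matrix A is strictly positive and the functions f (on the simplex) and each g_k (on [0,1]) are continuous as well as concave. Then the minimum of J over the compact set of row-stochastic matrices is attained, and it is attained at a deterministic quantizer Q* (each row of Q* is a standard basis vector). -/

import Mathlib

def simplex (N : ℕ) : Set (Fin N → ℝ) := {q | (∀ n, 0 ≤ q n) ∧ ∑ n, q n = 1}

/-- `f` is concave on the standard probability simplex. -/
def ConcaveOnSimplex {N : ℕ} (f : (Fin N → ℝ) → ℝ) : Prop :=
  ∀ a ∈ simplex N, ∀ b ∈ simplex N, ∀ lam : ℝ, lam ∈ Set.Icc (0:ℝ) 1 →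
    lam * f a + (1 - lam) * f b ≤ f (lam • a + (1 - lam) • b)

/-- The impurity functional `F(v) = (∑ n, v n) * f (v / ∑ n, v n)`. -/
noncomputable def impurity {N : ℕ} (f : (Fin N → ℝ) → ℝ) (v : Fin N → ℝ) : ℝ :=
  (∑ n, v n) * f (fun n => v n / ∑ m, v m)

/-- A joint distribution on `Fin N × Fin M`. -/
def IsJointDist {N M : ℕ} (p : Fin N → Fin M → ℝ) : Prop :=
  (∀ n m, 0 ≤ p n m) ∧ ∑ n, ∑ m, p n m = 1

/-- A row-stochastic matrix. -/
def RowStochastic {M K : ℕ} (Q : Fin M → Fin K → ℝ) : Prop :=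
  (∀ m k, 0 ≤ Q m k) ∧ ∀ m, ∑ k, Q m k = 1

/-- Marginal of the data `Y`: `p_{Y_m} = ∑ n, p n m`. -/
noncomputable def pY {N M : ℕ} (p : Fin N → Fin M → ℝ) (m : Fin M) : ℝ := ∑ n, p n m

/-- Joint distribution of the source and the quantizer output. -/
noncomputable def pXZ {N M K : ℕ} (p : Fin N → Fin M → ℝ) (Q : Fin M → Fin K → ℝ)
    (n : Fin N) (k : Fin K) : ℝ := ∑ m, p n m * Q m k

/-- Marginal of the quantizer output. -/
noncomputable def pZ {N M K : ℕ} (p : Fin N → Fin M → ℝ) (Q : Fin M → Fin K → ℝ)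
    (k : Fin K) : ℝ := ∑ n, pXZ p Q n k

/-- Joint distribution of the source and the channel output. -/
noncomputable def pXT {N M K H : ℕ} (p : Fin N → Fin M → ℝ) (Q : Fin M → Fin K → ℝ)
    (A : Fin K → Fin H → ℝ) (n : Fin N) (h : Fin H) : ℝ := ∑ k, pXZ p Q n k * A k h

/-- The objective `J(Q) = β ∑_h F(p_{XT}(·,h)) + ∑_k g_k(p_Z(k))`. -/
noncomputable def J {N M K H : ℕ} (β : ℝ) (f : (Fin N → ℝ) → ℝ) (g : Fin K → ℝ → ℝ)
    (p : Fin N → Fin M → ℝ) (A : Fin K → Fin H → ℝ) (Q : Fin M → Fin K → ℝ) : ℝ :=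
  β * ∑ h, impurity f (fun n => pXT p Q A n h) + ∑ k, g k (pZ p Q k)

/-- A deterministic (hard) quantizer. -/
def Deterministic {M K : ℕ} (Q : Fin M → Fin K → ℝ) : Prop :=
  ∀ m, ∃ k, Q m k = 1 ∧ ∀ k', k' ≠ k → Q m k' = 0

/-
`J` is concave on the convex set of row-stochastic matrices: `Q ↦ p_{XT}(·,h)` and `Q ↦ p_Z(k)`
are linear, the impurity `F` is the perspective of a concave function and hence concave on the
nonnegative orthant, and the `g_k` are concave. Every row-stochastic `Q` is a convex combination of
the finitely many deterministic quantizers `m ↦ e_{σ m}`, with weights `∏ m, Q m (σ m)`, so by the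
minimum principle for concave functions the minimum over all `Q` is attained among them.
-/

theorem ConcaveOn.sum {ι 𝕜 E β : Type*} [Semiring 𝕜] [PartialOrder 𝕜] [AddCommMonoid E]
    [AddCommMonoid β] [PartialOrder β] [IsOrderedAddMonoid β] [SMul 𝕜 E] [Module 𝕜 β]
    {s : Set E} {t : Finset ι} {f : ι → E → β} (hs : Convex 𝕜 s)
    (hf : ∀ i ∈ t, ConcaveOn 𝕜 s (f i)) : ConcaveOn 𝕜 s fun x => ∑ i ∈ t, f i x := by
  simpa only [← Finset.sum_fn] using Finset.sum_induction f (ConcaveOn 𝕜 s)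
    (fun _ _ => ConcaveOn.add) (concaveOn_const (0 : β) hs) hf

section Impurity

variable {N : ℕ} {f : (Fin N → ℝ) → ℝ}

theorem impurity_smul (c : ℝ) (v : Fin N → ℝ) :
    impurity f (c • v) = c * impurity f v := by
  by_cases hc : c = 0
  · simp [impurity, hc]
  · simp only [impurity, Pi.smul_apply, smul_eq_mul, ← Finset.mul_sum,
      mul_div_mul_left _ _ hc]
    ring

theorem normalize_mem_simplex {u : Fin N → ℝ} (hu : 0 ≤ u) (hs : 0 < ∑ n, u n) :
    (fun n => u n / ∑ m, u m) ∈ simplex N :=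
  ⟨fun n => div_nonneg (hu n) hs.le, by rw [← Finset.sum_div, div_self hs.ne']⟩

theorem impurity_add_impurity_le_impurity_add (hf : ConcaveOnSimplex f) {u v : Fin N → ℝ}
    (hu : 0 ≤ u) (hv : 0 ≤ v) :
    impurity f u + impurity f v ≤ impurity f (u + v) := by
  rcases (Fintype.sum_nonneg hu).eq_or_lt with hs | hs
  · obtain rfl := (Fintype.sum_eq_zero_iff_of_nonneg hu).1 hs.symm
    simp [impurity]
  rcases (Fintype.sum_nonneg hv).eq_or_lt with ht | ht
  · obtain rfl := (Fintype.sum_eq_zero_iff_of_nonneg hv).1 ht.symm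
    simp [impurity]
  set s := ∑ n, u n
  set t := ∑ n, v n
  have hst : 0 < s + t := add_pos hs ht
  have hlam : s / (s + t) ∈ Set.Icc (0 : ℝ) 1 :=
    ⟨by positivity, div_le_one_of_le₀ (by linarith) hst.le⟩
  have hconcave := hf _ (normalize_mem_simplex hu hs) _ (normalize_mem_simplex hv ht) _ hlam
  -- the normalization of `u + v` is the mixture of those of `u` and `v`, weighted by their masses
  have hmix : (s / (s + t)) • (fun n => u n / s) + (1 - s / (s + t)) • (fun n => v n / t) =
      fun n => (u n + v n) / (s + t) := by
    funext n
    simp only [Pi.add_apply, Pi.smul_apply, smul_eq_mul]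
    field_simp
    ring
  calc impurity f u + impurity f v
      = (s + t) * (s / (s + t) * f (fun n => u n / s) +
          (1 - s / (s + t)) * f (fun n => v n / t)) := by
        simp only [impurity]
        field_simp
        ring
    _ ≤ (s + t) * f (fun n => (u n + v n) / (s + t)) := by
        rw [← hmix]
        exact mul_le_mul_of_nonneg_left hconcave hst.le
    _ = impurity f (u + v) := by simp only [impurity, Pi.add_apply, Finset.sum_add_distrib]; rfl

theorem concaveOn_impurity (hf : ConcaveOnSimplex f) :
    ConcaveOn ℝ (Set.Ici 0) (impurity f) := by
  refine ⟨convex_Ici 0, fun u hu v hv a b ha hb _ => ?_⟩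
  simpa only [smul_eq_mul, impurity_smul] using
    impurity_add_impurity_le_impurity_add hf (smul_nonneg ha hu) (smul_nonneg hb hv)

end Impurity

section Channel

variable {N M K H : ℕ}

noncomputable def pXTLinearMap (p : Fin N → Fin M → ℝ) (A : Fin K → Fin H → ℝ) (h : Fin H) :
    (Fin M → Fin K → ℝ) →ₗ[ℝ] Fin N → ℝ where
  toFun Q n := pXT p Q A n h
  map_add' Q₁ Q₂ := by
    ext n
    simp only [pXT, pXZ, Pi.add_apply, mul_add, add_mul, Finset.sum_add_distrib]
  map_smul' c Q := by
    ext n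
    simp only [pXT, pXZ, Pi.smul_apply, smul_eq_mul, RingHom.id_apply, Finset.mul_sum,
      Finset.sum_mul, mul_assoc, mul_left_comm c]

noncomputable def pZLinearMap (p : Fin N → Fin M → ℝ) (k : Fin K) :
    (Fin M → Fin K → ℝ) →ₗ[ℝ] ℝ where
  toFun Q := pZ p Q k
  map_add' Q₁ Q₂ := by
    simp only [pZ, pXZ, Pi.add_apply, mul_add, Finset.sum_add_distrib]
  map_smul' c Q := by
    simp only [pZ, pXZ, Pi.smul_apply, smul_eq_mul, RingHom.id_apply, Finset.mul_sum,
      mul_left_comm c]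

theorem pXZ_nonneg {p : Fin N → Fin M → ℝ} {Q : Fin M → Fin K → ℝ} (hp : ∀ n m, 0 ≤ p n m)
    (hQ : ∀ m k, 0 ≤ Q m k) (n : Fin N) (k : Fin K) : 0 ≤ pXZ p Q n k :=
  Finset.sum_nonneg fun m _ => mul_nonneg (hp n m) (hQ m k)

theorem pXT_nonneg {p : Fin N → Fin M → ℝ} {Q : Fin M → Fin K → ℝ} {A : Fin K → Fin H → ℝ}
    (hp : ∀ n m, 0 ≤ p n m) (hQ : ∀ m k, 0 ≤ Q m k) (hA : ∀ k h, 0 ≤ A k h)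
    (n : Fin N) (h : Fin H) : 0 ≤ pXT p Q A n h :=
  Finset.sum_nonneg fun k _ => mul_nonneg (pXZ_nonneg hp hQ n k) (hA k h)

theorem sum_pZ {p : Fin N → Fin M → ℝ} {Q : Fin M → Fin K → ℝ} (hp : ∑ n, ∑ m, p n m = 1)
    (hQ : ∀ m, ∑ k, Q m k = 1) : ∑ k, pZ p Q k = 1 := by
  simp only [pZ, pXZ]
  rw [Finset.sum_comm, ← hp]
  refine Finset.sum_congr rfl fun n _ => ?_
  rw [Finset.sum_comm]
  simp [← Finset.mul_sum, hQ]

theorem pZ_mem_Icc {p : Fin N → Fin M → ℝ} {Q : Fin M → Fin K → ℝ} (hp : IsJointDist p)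
    (hQ : RowStochastic Q) (k : Fin K) : pZ p Q k ∈ Set.Icc (0 : ℝ) 1 := by
  have hZ : ∀ k, 0 ≤ pZ p Q k := fun k => Finset.sum_nonneg fun n _ => pXZ_nonneg hp.1 hQ.1 n k
  exact ⟨hZ k, sum_pZ hp.2 hQ.2 ▸ Finset.single_le_sum (fun k _ => hZ k) (Finset.mem_univ k)⟩

theorem convex_rowStochastic : Convex ℝ {Q : Fin M → Fin K → ℝ | RowStochastic Q} := by
  intro Q₁ h₁ Q₂ h₂ a b ha hb hab
  refine ⟨fun m k => ?_, fun m => ?_⟩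
  · simpa using add_nonneg (mul_nonneg ha (h₁.1 m k)) (mul_nonneg hb (h₂.1 m k))
  · simp [Finset.sum_add_distrib, ← Finset.mul_sum, h₁.2 m, h₂.2 m, hab]

theorem concaveOn_J {β : ℝ} (hβ : 0 ≤ β) {f : (Fin N → ℝ) → ℝ} (hf : ConcaveOnSimplex f)
    {g : Fin K → ℝ → ℝ} (hg : ∀ k, ConcaveOn ℝ (Set.Icc (0 : ℝ) 1) (g k))
    {p : Fin N → Fin M → ℝ} (hp : IsJointDist p) {A : Fin K → Fin H → ℝ}
    (hA : ∀ k h, 0 ≤ A k h) :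
    ConcaveOn ℝ {Q | RowStochastic Q} (J β f g p A) := by
  have himpurity : ∀ h, ConcaveOn ℝ {Q | RowStochastic Q}
      fun Q => impurity f (fun n => pXT p Q A n h) := fun h =>
    ((concaveOn_impurity hf).comp_linearMap (pXTLinearMap p A h)).subset
      (fun Q hQ n => pXT_nonneg hp.1 hQ.1 hA n h) convex_rowStochastic
  have hmarginal : ∀ k, ConcaveOn ℝ {Q | RowStochastic Q} fun Q => g k (pZ p Q k) := fun k =>
    ((hg k).comp_linearMap (pZLinearMap p k)).subset (fun Q hQ => pZ_mem_Icc hp hQ k)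
      convex_rowStochastic
  exact ((ConcaveOn.sum convex_rowStochastic fun h _ => himpurity h).smul hβ).add
    (ConcaveOn.sum convex_rowStochastic fun k _ => hmarginal k)

end Channel

section Deterministic

variable {ι κ : Type*} [Fintype ι] [Fintype κ] [DecidableEq ι]

theorem sum_prod_eq_one {Q : ι → κ → ℝ} (hQ : ∀ i, ∑ k, Q i k = 1) :
    ∑ σ : ι → κ, ∏ i, Q i (σ i) = 1 := by
  rw [← Fintype.prod_sum]
  simp [hQ]

theorem sum_prod_smul_pi_single [DecidableEq κ] {Q : ι → κ → ℝ} (hQ : ∀ i, ∑ k, Q i k = 1) :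
    ∑ σ : ι → κ, (∏ i, Q i (σ i)) • (fun i => Pi.single (σ i) (1 : ℝ)) = Q := by
  ext i₀ k₀
  have hfactor : ∀ σ : ι → κ, (∏ i, Q i (σ i)) * (Pi.single (σ i₀) 1 : κ → ℝ) k₀ =
      ∏ i, Q i (σ i) * if i = i₀ then (Pi.single (σ i) 1 : κ → ℝ) k₀ else 1 := by
    intro σ
    rw [Finset.prod_mul_distrib, Fintype.prod_ite_eq']
  have hrow : ∀ i, (∑ k, Q i k * if i = i₀ then (Pi.single k 1 : κ → ℝ) k₀ else 1) =
      if i = i₀ then Q i k₀ else 1 := by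
    intro i
    split_ifs
    · simp [Pi.single_apply]
    · simp [hQ]
  simp only [Finset.sum_apply, Pi.smul_apply, smul_eq_mul, hfactor]
  rw [← Fintype.prod_sum fun i k => Q i k * if i = i₀ then (Pi.single k 1 : κ → ℝ) k₀ else 1]
  simp only [hrow, Fintype.prod_ite_eq']

theorem mem_convexHull_range_pi_single [DecidableEq κ] {Q : ι → κ → ℝ} (h₀ : ∀ i k, 0 ≤ Q i k)
    (h₁ : ∀ i, ∑ k, Q i k = 1) :
    Q ∈ convexHull ℝ (Set.range fun (σ : ι → κ) i => Pi.single (σ i) (1 : ℝ)) :=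
  mem_convexHull_of_exists_fintype _ _ (fun σ => Finset.prod_nonneg fun i _ => h₀ i (σ i))
    (sum_prod_eq_one h₁) (fun σ => ⟨σ, rfl⟩) (sum_prod_smul_pi_single h₁)

end Deterministic

theorem rowStochastic_pi_single {M K : ℕ} (σ : Fin M → Fin K) :
    RowStochastic fun m => Pi.single (σ m) (1 : ℝ) := by
  refine ⟨fun m k => ?_, fun m => by simp⟩
  simp only [Pi.single_apply]
  split_ifs <;> norm_num

theorem deterministic_pi_single {M K : ℕ} (σ : Fin M → Fin K) :
    Deterministic fun m => Pi.single (σ m) (1 : ℝ) :=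
  fun m => ⟨σ m, Pi.single_eq_same _ _, fun _ hk => Pi.single_eq_of_ne hk _⟩

theorem stmt_10_general {N M K H : ℕ} (hK : 1 ≤ K)
    (β : ℝ) (hβ : 0 < β)
    (p : Fin N → Fin M → ℝ) (hp : IsJointDist p)
    (A : Fin K → Fin H → ℝ) (hA : RowStochastic A)
    (f : (Fin N → ℝ) → ℝ) (hf : ConcaveOnSimplex f)
    (g : Fin K → ℝ → ℝ) (hg : ∀ k, ConcaveOn ℝ (Set.Icc (0:ℝ) 1) (g k)) :
    ∃ Qstar : Fin M → Fin K → ℝ, RowStochastic Qstar ∧ Deterministic Qstar ∧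
      ∀ Q : Fin M → Fin K → ℝ, RowStochastic Q → J β f g p A Qstar ≤ J β f g p A Q := by
  have : Nonempty (Fin K) := ⟨⟨0, hK⟩⟩
  obtain ⟨σ₀, -, hσ₀⟩ := Finset.exists_min_image Finset.univ
    (fun σ : Fin M → Fin K => J β f g p A fun m => Pi.single (σ m) 1) Finset.univ_nonempty
  refine ⟨_, rowStochastic_pi_single σ₀, deterministic_pi_single σ₀, fun Q hQ => ?_⟩
  obtain ⟨_, ⟨σ, rfl⟩, hσ⟩ := (concaveOn_J hβ.le hf hg hp hA.1).exists_le_of_mem_convexHull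
    (by rintro _ ⟨σ, rfl⟩; exact rowStochastic_pi_single σ)
    (mem_convexHull_range_pi_single hQ.1 hQ.2)
  exact (hσ₀ σ (Finset.mem_univ σ)).trans hσ

/-- Existence of a deterministic global minimizer. -/
theorem stmt_10 {N M K H : ℕ} (hN : 1 ≤ N) (hK : 1 ≤ K)
    (β : ℝ) (hβ : 0 < β)
    (p : Fin N → Fin M → ℝ) (hp : IsJointDist p)
    (A : Fin K → Fin H → ℝ) (hA : RowStochastic A) (hApos : ∀ k h, 0 < A k h)
    (f : (Fin N → ℝ) → ℝ) (hf : ConcaveOnSimplex f) (hfc : ContinuousOn f (simplex N))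
    (g : Fin K → ℝ → ℝ) (hg : ∀ k, ConcaveOn ℝ (Set.Icc (0:ℝ) 1) (g k))
    (hgc : ∀ k, ContinuousOn (g k) (Set.Icc (0:ℝ) 1)) :
    ∃ Qstar : Fin M → Fin K → ℝ, RowStochastic Qstar ∧ Deterministic Qstar ∧
      ∀ Q : Fin M → Fin K → ℝ, RowStochastic Q → J β f g p A Qstar ≤ J β f g p A Q :=
  stmt_10_general hK β hβ p hp A hA f hf g hg
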